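/- Let G be a graph without isolated vertices and let v be a strong support vertex of G (adjacent to at least two leaves). Then there exists a minimum-weight total Roman {2}-dominating function f on G with f(v) = 2. -/

import Mathlib

/-!
If a leaf of `v` gets value `0` under a minimum TR2DF `f`, the leaf is dominated only through
`v`, so `f v = 2`. Otherwise both leaves `u`, `w` are positive, and totality at `u` makes `v`
positive, so `f` spends at least `3` on `v, u, w`. Reassigning `v ↦ 2`, `u ↦ 1`, `w ↦ 0` keeps a
TR2DF (the leaves touch nothing but `v`) and costs exactly `3`, hence is again minimum.
-/

/-- `f` is a total Roman {2}-dominating function on `G`. -/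
def IsTR2DF {V : Type*} (G : SimpleGraph V) (f : V → ℕ) : Prop :=
  (∀ v, f v ≤ 2) ∧
  (∀ v, f v = 0 →
    (∃ u, G.Adj u v ∧ f u = 2) ∨
    (∃ x y, x ≠ y ∧ G.Adj x v ∧ G.Adj y v ∧ f x = 1 ∧ f y = 1)) ∧
  (∀ v, 0 < f v → ∃ u, G.Adj u v ∧ 0 < f u)

/-- The total Roman {2}-domination number of `G`. -/
noncomputable def tR2 {V : Type*} [Fintype V] (G : SimpleGraph V) : ℕ :=
  sInf {w | ∃ f : V → ℕ, IsTR2DF G f ∧ ∑ v, f v = w}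

open Function Finset

theorem Fintype.sum_update_add_apply {ι M : Type*} [Fintype ι] [DecidableEq ι] [AddCommMonoid M]
    (f : ι → M) (i : ι) (b : M) : ∑ x, update f i b x + f i = ∑ x, f x + b := by
  rw [sum_update_of_mem (mem_univ i), sum_eq_sum_sdiff_singleton_add (mem_univ i) f, add_comm b,
    add_right_comm]

theorem SimpleGraph.eq_of_adj_of_degree_eq_one {V : Type*} {G : SimpleGraph V} {u v a : V}
    [Fintype (G.neighborSet u)] (hu : G.degree u = 1) (hv : G.Adj u v) (ha : G.Adj u a) :
    a = v :=
  (G.degree_eq_one_iff_existsUnique_adj.mp hu).unique ha hv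

section TR2DF

variable {V : Type*} {G : SimpleGraph V}

theorem isTR2DF_const_two (hiso : ∀ v : V, ∃ u, G.Adj u v) : IsTR2DF G fun _ => 2 :=
  ⟨fun _ => le_rfl, fun _ h => absurd h two_ne_zero,
    fun v _ => (hiso v).imp fun _ hu => ⟨hu, two_pos⟩⟩

theorem tR2_le_sum [Fintype V] {f : V → ℕ} (hf : IsTR2DF G f) : tR2 G ≤ ∑ x, f x :=
  Nat.sInf_le ⟨f, hf, rfl⟩

theorem exists_isTR2DF_sum_eq_tR2 [Fintype V] (hiso : ∀ v : V, ∃ u, G.Adj u v) :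
    ∃ f : V → ℕ, IsTR2DF G f ∧ ∑ x, f x = tR2 G :=
  Nat.sInf_mem (s := {w | ∃ f : V → ℕ, IsTR2DF G f ∧ ∑ v, f v = w})
    ⟨_, _, isTR2DF_const_two hiso, rfl⟩

namespace IsTR2DF

variable {f : V → ℕ} {u v : V} [Fintype (G.neighborSet u)]

theorem eq_two_of_leaf_eq_zero (hf : IsTR2DF G f) (hu : G.degree u = 1) (huv : G.Adj u v)
    (hfu : f u = 0) : f v = 2 := by
  have leaf := fun {a} (ha : G.Adj a u) => G.eq_of_adj_of_degree_eq_one hu huv ha.symm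
  rcases hf.2.1 u hfu with ⟨a, ha, ha2⟩ | ⟨a, b, hab, ha, hb, -⟩
  · rwa [leaf ha] at ha2
  · exact absurd ((leaf ha).trans (leaf hb).symm) hab

theorem pos_of_leaf_pos (hf : IsTR2DF G f) (hu : G.degree u = 1) (huv : G.Adj u v)
    (hfu : 0 < f u) : 0 < f v := by
  obtain ⟨a, ha, hfa⟩ := hf.2.2 u hfu
  rwa [← G.eq_of_adj_of_degree_eq_one hu huv ha.symm]

theorem update_leaves [DecidableEq V] {w : V} [Fintype (G.neighborSet w)] (hf : IsTR2DF G f)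
    (huw : u ≠ w) (hu : G.degree u = 1) (hw : G.degree w = 1) (hvu : G.Adj v u)
    (hvw : G.Adj v w) : IsTR2DF G (update (update (update f v 2) u 1) w 0) := by
  set g := update (update (update f v 2) u 1) w 0
  have hvu' : v ≠ u := hvu.ne
  have hvw' : v ≠ w := hvw.ne
  have gv : g v = 2 := by simp [g, hvu', hvw']
  have gu : g u = 1 := by simp [g, huw]
  have gw : g w = 0 := by simp [g]
  have g_of_ne : ∀ {x}, x ≠ v → x ≠ u → x ≠ w → g x = f x := by
    intro x hxv hxu hxw
    simp [g, hxv, hxu, hxw]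
  have g_nbr : ∀ {a x}, G.Adj a x → x ≠ v → a = v ∨ g a = f a := by
    intro a x hax hxv
    by_cases hav : a = v
    · exact .inl hav
    refine .inr (g_of_ne hav ?_ ?_) <;> rintro rfl
    exacts [hxv (G.eq_of_adj_of_degree_eq_one hu hvu.symm hax),
      hxv (G.eq_of_adj_of_degree_eq_one hw hvw.symm hax)]
  refine ⟨fun x => ?_, fun x hx => ?_, fun x hx => ?_⟩
  · simp only [g, update_apply]
    split_ifs
    exacts [zero_le_two, one_le_two, le_rfl, hf.1 x]
  · by_cases hxw : x = w
    · exact .inl ⟨v, hxw ▸ hvw, gv⟩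
    by_cases hxv : x = v
    · simp [hxv, gv] at hx
    by_cases hxu : x = u
    · simp [hxu, gu] at hx
    rcases hf.2.1 x (g_of_ne hxv hxu hxw ▸ hx) with ⟨a, ha, ha2⟩ | ⟨a, b, hab, ha, hb, ha1, hb1⟩
    · rcases g_nbr ha hxv with rfl | hga
      exacts [.inl ⟨_, ha, gv⟩, .inl ⟨a, ha, hga ▸ ha2⟩]
    · rcases g_nbr ha hxv with rfl | hga
      · exact .inl ⟨_, ha, gv⟩
      rcases g_nbr hb hxv with rfl | hgb
      exacts [.inl ⟨_, hb, gv⟩, .inr ⟨a, b, hab, ha, hb, hga ▸ ha1, hgb ▸ hb1⟩]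
  · by_cases hxv : x = v
    · exact ⟨u, hxv ▸ hvu.symm, gu ▸ one_pos⟩
    by_cases hxu : x = u
    · exact ⟨v, hxu ▸ hvu, gv ▸ two_pos⟩
    by_cases hxw : x = w
    · simp [hxw, gw] at hx
    obtain ⟨a, ha, hfa⟩ := hf.2.2 x (g_of_ne hxv hxu hxw ▸ hx)
    rcases g_nbr ha hxv with rfl | hga
    exacts [⟨_, ha, gv ▸ two_pos⟩, ⟨a, ha, hga ▸ hfa⟩]

end IsTR2DF

end TR2DF

theorem stmt16 {V : Type*} [Fintype V] (G : SimpleGraph V) [DecidableRel G.Adj]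
    (hiso : ∀ v : V, ∃ u, G.Adj u v)
    (v : V) (hstrong : ∃ u w : V, u ≠ w ∧ G.Adj v u ∧ G.Adj v w ∧
      G.degree u = 1 ∧ G.degree w = 1) :
    ∃ f : V → ℕ, IsTR2DF G f ∧ ∑ x, f x = tR2 G ∧ f v = 2 := by
  classical
  obtain ⟨u, w, huw, hvu, hvw, hu, hw⟩ := hstrong
  obtain ⟨f, hf, hf_min⟩ := exists_isTR2DF_sum_eq_tR2 hiso
  by_cases hzero : f u = 0 ∨ f w = 0
  · refine ⟨f, hf, hf_min, ?_⟩
    rcases hzero with h | h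
    exacts [hf.eq_two_of_leaf_eq_zero hu hvu.symm h, hf.eq_two_of_leaf_eq_zero hw hvw.symm h]
  obtain ⟨hu0, hw0⟩ := not_or.mp hzero
  have hfv : 0 < f v := hf.pos_of_leaf_pos hu hvu.symm (Nat.pos_of_ne_zero hu0)
  have h1 := Fintype.sum_update_add_apply f v 2
  have h2 := Fintype.sum_update_add_apply (update f v 2) u 1
  have h3 := Fintype.sum_update_add_apply (update (update f v 2) u 1) w 0
  rw [update_of_ne hvu.ne'] at h2
  rw [update_of_ne huw.symm, update_of_ne hvw.ne'] at h3
  have hg := hf.update_leaves huw hu hw hvu hvw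
  set g := update (update (update f v 2) u 1) w 0
  refine ⟨g, hg, le_antisymm ?_ (tR2_le_sum hg), by simp [g, hvu.ne, hvw.ne]⟩
  omega
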